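/- Let G be a graph on n vertices with chromatic number χ(G) ≤ p, let A_1,…,A_p be the color classes of a proper p-coloring of V(G), let m_1,…,m_p be the part sizes of the Turán graph T(n,p) (so each m_i ∈ {⌈n/p⌉, ⌊n/p⌋} and Σ m_i = n), and write |A_i| = m_i + s_i. Then e(G) ≤ t(n,p) − Σ_{i=1}^{p} C(|s_i|, 2), where t(n,p) is the number of edges of T(n,p). -/

import Mathlib

open SimpleGraph

universe u v

/-- `F` embeds into `G` as a subgraph (injective graph homomorphism). -/
def Embeds {α : Type u} {β : Type v} (F : SimpleGraph α) (G : SimpleGraph β) : Prop :=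
  ∃ f : α ↪ β, ∀ a b, F.Adj a b → G.Adj (f a) (f b)

/-- Join of two graphs: all cross edges added. -/
def join {α β : Type*} (G : SimpleGraph α) (H : SimpleGraph β) : SimpleGraph (α ⊕ β) where
  Adj x y :=
    match x, y with
    | Sum.inl a, Sum.inl b => G.Adj a b
    | Sum.inr a, Sum.inr b => H.Adj a b
    | Sum.inl _, Sum.inr _ => True
    | Sum.inr _, Sum.inl _ => True
  symm := by
    constructor
    rintro (a | a) (b | b) h
    · exact G.adj_symm h
    · trivial
    · trivial
    · exact H.adj_symm h
  loopless := by
    constructor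
    rintro (a | a) h
    · exact G.loopless.irrefl a h
    · exact H.loopless.irrefl a h

/-- Disjoint union of two graphs. -/
def dUnion {α β : Type*} (G : SimpleGraph α) (H : SimpleGraph β) : SimpleGraph (α ⊕ β) where
  Adj x y :=
    match x, y with
    | Sum.inl a, Sum.inl b => G.Adj a b
    | Sum.inr a, Sum.inr b => H.Adj a b
    | Sum.inl _, Sum.inr _ => False
    | Sum.inr _, Sum.inl _ => False
  symm := by
    constructor
    rintro (a | a) (b | b) h
    · exact G.adj_symm h
    · exact h.elim
    · exact h.elim
    · exact H.adj_symm h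
  loopless := by
    constructor
    rintro (a | a) h
    · exact G.loopless.irrefl a h
    · exact H.loopless.irrefl a h

/-- The star `S_{k+1}` on `k+1` vertices, with center `0`. -/
def starG (k : ℕ) : SimpleGraph (Fin (k + 1)) :=
  SimpleGraph.fromRel (fun i _ => i = 0)

/-- The matching `M_{2k}` consisting of `k` disjoint edges on `2k` vertices. -/
def matchingG (k : ℕ) : SimpleGraph (Fin (2 * k)) :=
  SimpleGraph.fromRel (fun i j => (i : ℕ) / 2 = (j : ℕ) / 2)

/-- `Q(p,k) = K₁ ∨ T(pk,p)`. -/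
def Q (p k : ℕ) : SimpleGraph (Unit ⊕ Fin (p * k)) :=
  join (⊤ : SimpleGraph Unit) (SimpleGraph.turanGraph (p * k) p)

/-- Number of edges of a graph. -/
noncomputable def eCount {α : Type*} (G : SimpleGraph α) : ℕ := Nat.card G.edgeSet

/-- `t(n,p)`, the number of edges of the Turán graph `T(n,p)`. -/
noncomputable def tur (n p : ℕ) : ℕ := eCount (SimpleGraph.turanGraph n p)

/-- Degree of a vertex, instance-free. -/
noncomputable def ndeg {α : Type*} (G : SimpleGraph α) (v : α) : ℕ := Nat.card (G.neighborSet v)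

/-- An edge-coloring `c` of `K_n` admits a rainbow copy of `F`. -/
def HasRainbow {n : ℕ} {β : Type*} (c : Sym2 (Fin n) → ℕ) (F : SimpleGraph β) : Prop :=
  ∃ f : β ↪ Fin n, ∀ a b a' b', F.Adj a b → F.Adj a' b' →
    c s(f a, f b) = c s(f a', f b') → s(a, b) = s(a', b')

/-- Number of colors used on the edges of `K_n` by the coloring `c`. -/
noncomputable def colorsUsed (n : ℕ) (c : Sym2 (Fin n) → ℕ) : ℕ :=
  Nat.card (c '' (⊤ : SimpleGraph (Fin n)).edgeSet)

/-- The Turán graph `T(vp,p)` with a matching of `k-1` edges added inside the part `0`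
and one extra edge added inside the part `1`. -/
def turanMM (w p k : ℕ) : SimpleGraph (Fin (w * p)) :=
  SimpleGraph.fromRel (fun i j =>
    ((i : ℕ) % p ≠ (j : ℕ) % p)
    ∨ ((i : ℕ) % p = 0 ∧ (j : ℕ) % p = 0 ∧ (i : ℕ) / p / 2 = (j : ℕ) / p / 2 ∧
        (i : ℕ) / p < 2 * (k - 1))
    ∨ ((i : ℕ) % p = 1 ∧ (j : ℕ) % p = 1 ∧ (i : ℕ) / p < 2 ∧ (j : ℕ) / p < 2))

/-! A proper `p`-colouring puts `G` inside the complete multipartite graph on its colour classes,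
which has `(n² - ∑ |Aᵢ|²) / 2` edges; the same count gives `t(n,p)` from the balanced class sizes
of `T(n,p)`. When every `xᵢ ∈ {q, q + 1}` we have `xᵢ² = (2q + 1) xᵢ - q(q + 1)`, so `∑ xᵢ²` only
depends on `∑ xᵢ = n`, and `t(n,p) = (n² - ∑ mᵢ²) / 2`. As `∑ sᵢ = 0`, the claim becomes
`∑ (2 mᵢ sᵢ + |sᵢ|) ≥ 0`, which holds termwise after subtracting `(2q + 1) sᵢ`, because
`2 mᵢ - 2q - 1 = ±1`. -/

open Finset

lemma Nat.add_sub_one_div_eq_or {n p : ℕ} (hp : 0 < p) :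
    (n + p - 1) / p = n / p ∨ (n + p - 1) / p = n / p + 1 := by
  have h1 : (n + p - 1) / p ≤ (n + p) / p := Nat.div_le_div_right (by omega)
  have h2 : n / p ≤ (n + p - 1) / p := Nat.div_le_div_right (by omega)
  rw [Nat.add_div_right n hp] at h1
  omega

lemma Int.two_mul_choose_two_natAbs (a : ℤ) : 2 * (a.natAbs.choose 2 : ℤ) = a ^ 2 - |a| := by
  rw [Int.abs_eq_natAbs, ← Int.natAbs_sq]
  generalize a.natAbs = k
  have h : 2 * k.choose 2 = k * (k - 1) :=
    Nat.choose_two_right k ▸ Nat.mul_div_cancel' (Nat.even_mul_pred_self k).two_dvd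
  rcases k with _ | k
  · simp
  · rw [← Nat.cast_ofNat, ← Nat.cast_mul, h]
    push_cast
    ring

section BalancedSums

variable {ι : Type*} [Fintype ι] (q : ℤ)

lemma sum_sq_of_forall_eq_or_eq_add_one (x : ι → ℤ) (hx : ∀ i, x i = q ∨ x i = q + 1) :
    ∑ i, x i ^ 2 = (2 * q + 1) * ∑ i, x i - Fintype.card ι * (q * (q + 1)) := by
  have h i : x i ^ 2 = (2 * q + 1) * x i - q * (q + 1) := by
    rcases hx i with h | h <;> rw [h] <;> ring
  simp [h, mul_sum, sum_sub_distrib]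

lemma sum_sq_sub_abs_le (m s : ι → ℤ) (hm : ∀ i, m i = q ∨ m i = q + 1) (hs : ∑ i, s i = 0) :
    ∑ i, (s i ^ 2 - |s i|) ≤ ∑ i, (m i + s i) ^ 2 - ∑ i, m i ^ 2 := by
  have h i : (2 * q + 1) * s i ≤ (m i + s i) ^ 2 - m i ^ 2 - (s i ^ 2 - |s i|) := by
    rcases hm i with h | h <;> rw [h] <;> cases abs_cases (s i) <;> nlinarith
  have := sum_le_sum fun i (_ : i ∈ univ) => h i
  simp only [← mul_sum, hs, mul_zero, sum_sub_distrib] at this ⊢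
  linarith

end BalancedSums

lemma eCount_eq_card_edgeFinset {V : Type*} [Fintype V] (G : SimpleGraph V) [DecidableRel G.Adj] :
    eCount G = #G.edgeFinset := by
  rw [eCount, ← coe_edgeFinset, Nat.card_coe_set_eq, Set.ncard_coe_finset]

lemma eCount_mono {V : Type*} [Finite V] {G H : SimpleGraph V} (h : G ≤ H) :
    eCount G ≤ eCount H := by
  rw [eCount, eCount, Nat.card_coe_set_eq, Nat.card_coe_set_eq]
  exact Set.ncard_le_ncard (edgeSet_mono h) (Set.toFinite _)

section CompleteMultipartite

variable {V ι : Type*} [Fintype V] [DecidableEq ι] (f : V → ι)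

lemma degree_comap_top_add_card_fiber [DecidableRel ((⊤ : SimpleGraph ι).comap f).Adj] (v : V) :
    ((⊤ : SimpleGraph ι).comap f).degree v + #{w | f w = f v} = Fintype.card V := by
  rw [← card_neighborFinset_eq_degree, neighborFinset_eq_filter]
  simpa [eq_comm] using card_filter_add_card_filter_not (s := univ) (fun w => f v ≠ f w)

lemma two_mul_eCount_comap_top_add_sum_sq [Fintype ι] :
    2 * eCount ((⊤ : SimpleGraph ι).comap f) + ∑ i, #{v | f v = i} ^ 2 = Fintype.card V ^ 2 := by
  have hfib : ∑ v, #{w | f w = f v} = ∑ i, #{v | f v = i} ^ 2 := by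
    rw [← sum_fiberwise univ f]
    refine sum_congr rfl fun i _ => ?_
    rw [sum_congr rfl fun v hv => by rw [(mem_filter.1 hv).2], sum_const, smul_eq_mul, sq]
  rw [eCount_eq_card_edgeFinset, ← sum_degrees_eq_twice_card_edges, ← hfib, ← sum_add_distrib,
    sum_congr rfl fun v _ => degree_comap_top_add_card_fiber f v, sum_const, card_univ,
    smul_eq_mul, sq]

lemma sum_card_fiber [Fintype ι] : ∑ i, #{v | f v = i} = Fintype.card V :=
  (card_eq_sum_card_fiberwise fun _ _ => mem_univ _).symm

lemma two_mul_eCount_le_of_coloring [Fintype ι] {G : SimpleGraph V} (c : G.Coloring ι) :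
    (2 * eCount G : ℤ) ≤ Fintype.card V ^ 2 - ∑ i, (#{v | c v = i} : ℤ) ^ 2 := by
  have hK : (2 * eCount ((⊤ : SimpleGraph ι).comap c) : ℤ) + ∑ i, (#{v | c v = i} : ℤ) ^ 2 =
      Fintype.card V ^ 2 := by
    exact_mod_cast two_mul_eCount_comap_top_add_sum_sq c
  have hG : (eCount G : ℤ) ≤ eCount ((⊤ : SimpleGraph ι).comap c) := by
    exact_mod_cast eCount_mono c.le_comap
  linarith

end CompleteMultipartite

lemma turanGraph_eq_comap_top {n p : ℕ} (hp : 0 < p) :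
    turanGraph n p = (⊤ : SimpleGraph (Fin p)).comap fun v : Fin n => ⟨v % p, Nat.mod_lt _ hp⟩ := by
  ext v w
  simp [turanGraph_adj, Fin.ext_iff]

lemma card_filter_val_mod_eq (n : ℕ) {p : ℕ} (hp : 0 < p) {r : ℕ} (hr : r < p) :
    #{v : Fin n | (v : ℕ) % p = r} = n / p + if r < n % p then 1 else 0 := by
  have hcount := Nat.count_modEq_card (b := n) hp r
  rw [Nat.mod_eq_of_lt hr] at hcount
  rw [← hcount, Nat.count_eq_card_filter_range, card_filter, card_filter,
    Fin.sum_univ_eq_sum_range (fun x => if x % p = r then 1 else 0)]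
  simp [Nat.ModEq, Nat.mod_eq_of_lt hr]

lemma two_mul_tur_eq {n p : ℕ} (hp : 0 < p) (m : Fin p → ℤ)
    (hm : ∀ i, m i = (n / p : ℕ) ∨ m i = (n / p : ℕ) + 1) (hsum : ∑ i, m i = n) :
    (2 * tur n p : ℤ) = n ^ 2 - ∑ i, m i ^ 2 := by
  set f : Fin n → Fin p := fun v => ⟨v % p, Nat.mod_lt _ hp⟩
  have hT : (2 * tur n p : ℤ) + ∑ i, (#{v | f v = i} : ℤ) ^ 2 = n ^ 2 := by
    have := two_mul_eCount_comap_top_add_sum_sq f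
    rw [← turanGraph_eq_comap_top hp, ← tur, Fintype.card_fin] at this
    exact_mod_cast this
  have hTsum : ∑ i, (#{v | f v = i} : ℤ) = n := by
    exact_mod_cast (sum_card_fiber f).trans (Fintype.card_fin n)
  have ht r : (#{v | f v = r} : ℤ) = (n / p : ℕ) ∨ (#{v | f v = r} : ℤ) = (n / p : ℕ) + 1 := by
    simp only [f, Fin.ext_iff, card_filter_val_mod_eq n hp r.isLt]
    split_ifs <;> simp
  have hsq := sum_sq_of_forall_eq_or_eq_add_one _ _ ht
  rw [hTsum, ← hsum, ← sum_sq_of_forall_eq_or_eq_add_one _ _ hm] at hsq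
  linarith

theorem stmt2 (n p : ℕ) (hp : 0 < p) (G : SimpleGraph (Fin n)) (c : G.Coloring (Fin p))
    (m : Fin p → ℕ) (s : Fin p → ℤ)
    (hm : ∀ i, m i = n / p ∨ m i = (n + p - 1) / p)
    (hsum : ∑ i, m i = n)
    (hA : ∀ i, (Nat.card {v : Fin n // c v = i} : ℤ) = (m i : ℤ) + s i) :
    (eCount G : ℤ) ≤ (tur n p : ℤ) - ∑ i, ((s i).natAbs.choose 2 : ℤ) := by
  have hA' i : (#{v | c v = i} : ℤ) = m i + s i := by
    rw [← hA, Nat.card_eq_fintype_card, Fintype.card_subtype]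
  have hm' i : (m i : ℤ) = (n / p : ℕ) ∨ (m i : ℤ) = (n / p : ℕ) + 1 := by
    rcases hm i with h | h <;> rcases Nat.add_sub_one_div_eq_or (n := n) hp with h' | h' <;>
      simp [h, h']
  have hmsum : ∑ i, (m i : ℤ) = n := by exact_mod_cast hsum
  have hssum : ∑ i, s i = 0 := by
    have := congrArg (Nat.cast : ℕ → ℤ) (sum_card_fiber c)
    push_cast [hA', sum_add_distrib, hmsum, Fintype.card_fin] at this
    linarith
  have hG := two_mul_eCount_le_of_coloring c
  simp only [hA', Fintype.card_fin] at hG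
  have hT := two_mul_tur_eq hp _ hm' hmsum
  have key := sum_sq_sub_abs_le _ _ s hm' hssum
  simp only [← Int.two_mul_choose_two_natAbs, ← mul_sum] at key
  linarith
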